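/- arXiv:2106.12566 — 3 statements merged into one kernel-verified Lean document; each statement's English description precedes it below -/
import Mathlib

section
/- Let d ≥ 1 and n > d + 1. There exist weight matrices W_rel^Q, W_rel^K ∈ ℝ^{d×d} and relative positional encoding weights b_{-(n-1)}, ..., b_{n-1} ∈ ℝ such that there do NOT exist weight matrices W_van^Q, W_van^K ∈ ℝ^{d×d} and input row vectors x_1, ..., x_n ∈ ℝ^d satisfying, for all i, j ∈ {1,...,n}, exp(α_{ij}^{rel}) / Σ_{k=1}^n exp(α_{ik}^{rel}) = exp(α_{ij}^{van}) / Σ_{k=1}^n exp(α_{ik}^{van}), where α_{ij}^{rel} = (1/√d)·(x_i W_rel^Q)·(x_j W_rel^K)^⊤ + b_{j−i} and α_{ij}^{van} = (1/√d)·(x_i W_van^Q)·(x_j W_van^K)^⊤. -/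
open Matrix

/-- There exist RPE weight matrices and RPE biases such that no vanilla
(dot-then-exponentiate) attention can reproduce the RPE softmax attention
distribution, when `n > d + 1`. -/
theorem rpe_beyond_vanilla_attention (d n : ℕ) (hd : 1 ≤ d) (hn : d + 1 < n) :
    ∃ (WrelQ WrelK : Matrix (Fin d) (Fin d) ℝ) (b : ℤ → ℝ),
      ¬ ∃ (WvanQ WvanK : Matrix (Fin d) (Fin d) ℝ) (x : Fin n → Fin d → ℝ),
        ∀ i j : Fin n,
          Real.exp ((1 / Real.sqrt d) *
              (Matrix.vecMul (x i) WrelQ ⬝ᵥ Matrix.vecMul (x j) WrelK) + b ((j : ℤ) - (i : ℤ))) /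
            (∑ k : Fin n, Real.exp ((1 / Real.sqrt d) *
              (Matrix.vecMul (x i) WrelQ ⬝ᵥ Matrix.vecMul (x k) WrelK) + b ((k : ℤ) - (i : ℤ))))
          =
          Real.exp ((1 / Real.sqrt d) *
              (Matrix.vecMul (x i) WvanQ ⬝ᵥ Matrix.vecMul (x j) WvanK)) /
            (∑ k : Fin n, Real.exp ((1 / Real.sqrt d) *
              (Matrix.vecMul (x i) WvanQ ⬝ᵥ Matrix.vecMul (x k) WvanK))) := by
  classical
  refine ⟨0, 0, fun t => if t = 0 then 1 else 0, ?_⟩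
  rintro ⟨WQ, WK, x, hx⟩
  set k : Fin n → Fin d → ℝ := fun j => Matrix.vecMul (x j) WK with hk
  set q : Fin n → Fin d → ℝ := fun i => Matrix.vecMul (x i) WQ with hq
  -- bias function shorthand
  set b : ℤ → ℝ := fun t => if t = 0 then (1 : ℝ) else 0 with hb
  -- denominators
  set S : Fin n → ℝ := fun i => ∑ m : Fin n, Real.exp (b ((m : ℤ) - (i : ℤ))) with hS
  set T : Fin n → ℝ := fun i =>
    ∑ m : Fin n, Real.exp ((1 / Real.sqrt d) * (q i ⬝ᵥ k m)) with hT
  have hnpos : 0 < n := by omega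
  have hSpos : ∀ i, 0 < S i := fun i =>
    Finset.sum_pos (fun m _ => Real.exp_pos _) ⟨⟨0, hnpos⟩, Finset.mem_univ _⟩
  have hTpos : ∀ i, 0 < T i := fun i =>
    Finset.sum_pos (fun m _ => Real.exp_pos _) ⟨⟨0, hnpos⟩, Finset.mem_univ _⟩
  -- the key pointwise identity: vanilla logit = bias + row constant
  have key : ∀ i j : Fin n,
      (1 / Real.sqrt d) * (q i ⬝ᵥ k j) =
        b ((j : ℤ) - (i : ℤ)) + Real.log (T i / S i) := by
    intro i j
    have h := hx i j
    have hrel : (1 / Real.sqrt d) *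
        (Matrix.vecMul (x i) (0 : Matrix (Fin d) (Fin d) ℝ) ⬝ᵥ
          Matrix.vecMul (x j) (0 : Matrix (Fin d) (Fin d) ℝ)) = 0 := by
      simp
    have h' : Real.exp (b ((j : ℤ) - (i : ℤ))) / S i =
        Real.exp ((1 / Real.sqrt d) * (q i ⬝ᵥ k j)) / T i := by
      simpa [hS, hT, hq, hk] using h
    have hexp : Real.exp ((1 / Real.sqrt d) * (q i ⬝ᵥ k j)) =
        Real.exp (b ((j : ℤ) - (i : ℤ))) * (T i / S i) := by
      rw [div_eq_div_iff (hSpos i).ne' (hTpos i).ne'] at h'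
      rw [← mul_div_assoc, eq_div_iff (hSpos i).ne']
      exact h'.symm
    have hpos : 0 < T i / S i := div_pos (hTpos i) (hSpos i)
    have : Real.exp ((1 / Real.sqrt d) * (q i ⬝ᵥ k j)) =
        Real.exp (b ((j : ℤ) - (i : ℤ)) + Real.log (T i / S i)) := by
      rw [Real.exp_add, Real.exp_log hpos, hexp]
    exact Real.exp_injective this
  -- n > d+1 vectors (k j, 1) in ℝ^d × ℝ are linearly dependent
  have hdep : ¬ LinearIndependent ℝ (fun j : Fin n => ((k j, 1) : (Fin d → ℝ) × ℝ)) := by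
    intro h
    have := h.fintype_card_le_finrank
    simp [Module.finrank_prod, Module.finrank_pi] at this
    omega
  obtain ⟨g, hsum, i0, hg0⟩ := Fintype.not_linearIndependent_iff.mp hdep
  have h1 : (∑ j : Fin n, g j • k j) = 0 := by
    have := congrArg Prod.fst hsum
    simpa [Prod.fst_sum] using this
  have h2 : (∑ j : Fin n, g j) = 0 := by
    have := congrArg Prod.snd hsum
    simpa [Prod.snd_sum] using this
  -- evaluate ∑_j g j * (vanilla logit at (i0, j)) two ways
  have hL : ∑ j : Fin n, g j * ((1 / Real.sqrt d) * (q i0 ⬝ᵥ k j)) = 0 := by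
    have h1' : ∀ m : Fin d, ∑ j : Fin n, g j * k j m = 0 := fun m => by
      have := congrFun h1 m
      simpa [Finset.sum_apply, Pi.smul_apply, smul_eq_mul] using this
    calc ∑ j : Fin n, g j * ((1 / Real.sqrt d) * (q i0 ⬝ᵥ k j))
        = ∑ j : Fin n, ∑ m : Fin d, (1 / Real.sqrt d) * q i0 m * (g j * k j m) := by
          refine Finset.sum_congr rfl fun j _ => ?_
          simp only [dotProduct, Finset.mul_sum]
          refine Finset.sum_congr rfl fun m _ => by ring
      _ = ∑ m : Fin d, ∑ j : Fin n, (1 / Real.sqrt d) * q i0 m * (g j * k j m) :=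
          Finset.sum_comm
      _ = ∑ m : Fin d, (1 / Real.sqrt d) * q i0 m * (∑ j : Fin n, g j * k j m) := by
          refine Finset.sum_congr rfl fun m _ => by rw [Finset.mul_sum]
      _ = 0 := by simp [h1']
  have hR : ∑ j : Fin n, g j * ((1 / Real.sqrt d) * (q i0 ⬝ᵥ k j)) = g i0 := by
    have hbij : ∀ j : Fin n, b ((j : ℤ) - (i0 : ℤ)) = if j = i0 then (1 : ℝ) else 0 := by
      intro j
      by_cases hji : j = i0
      · simp [hb, hji]
      · have : ((j : ℤ) - (i0 : ℤ)) ≠ 0 := by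
          intro hc
          apply hji
          have : (j : ℤ) = (i0 : ℤ) := by omega
          exact_mod_cast Fin.ext (by exact_mod_cast this)
        simp [hb, this, hji]
    calc ∑ j : Fin n, g j * ((1 / Real.sqrt d) * (q i0 ⬝ᵥ k j))
        = ∑ j : Fin n, g j * (b ((j : ℤ) - (i0 : ℤ)) + Real.log (T i0 / S i0)) := by
          refine Finset.sum_congr rfl fun j _ => by rw [key i0 j]
      _ = ∑ j : Fin n, (g j * b ((j : ℤ) - (i0 : ℤ)) + g j * Real.log (T i0 / S i0)) := by
          refine Finset.sum_congr rfl fun j _ => by ring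
      _ = (∑ j : Fin n, g j * b ((j : ℤ) - (i0 : ℤ))) +
            (∑ j : Fin n, g j) * Real.log (T i0 / S i0) := by
          rw [Finset.sum_add_distrib, Finset.sum_mul]
      _ = ∑ j : Fin n, g j * b ((j : ℤ) - (i0 : ℤ)) := by rw [h2]; ring
      _ = ∑ j : Fin n, (if j = i0 then g j else 0) := by
          refine Finset.sum_congr rfl fun j _ => by rw [hbij j]; split <;> simp
      _ = g i0 := by rw [Finset.sum_ite_eq' Finset.univ i0 g]; simp
  exact hg0 (by rw [← hR, hL])
end

section
/- Let w_1, ..., w_m be i.i.d. standard Gaussian random vectors on ℝ^d and let φ(x) = (exp(−‖x‖²/2)/√m)·(exp(⟨w_1, x⟩), ..., exp(⟨w_m, x⟩)) be the Positive Random Feature (PRF) map. Then for all x, y ∈ ℝ^d, E[⟨φ(x), φ(y)⟩] = exp(⟨x, y⟩); that is, the PRF kernel is an unbiased estimator of the exponentiated dot product. -/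
open MeasureTheory ProbabilityTheory

/-- The joint law of `m` i.i.d. standard Gaussian random vectors on `ℝ^d`. -/
noncomputable def iidStdGaussian (m d : ℕ) : Measure (Fin m → Fin d → ℝ) :=
  Measure.pi fun _ => Measure.pi fun _ => gaussianReal 0 1

/-- The Positive Random Feature (PRF) map with `m` features:
`φ(x)_i = (exp (−‖x‖²/2)/√m) · exp ⟨w_i, x⟩`. -/
noncomputable def prf (m d : ℕ) (W : Fin m → Fin d → ℝ) (x : Fin d → ℝ) : Fin m → ℝ :=
  fun i => (Real.exp (-(∑ j, (x j) ^ 2) / 2) / Real.sqrt m) * Real.exp (∑ j, W i j * x j)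

/-!
Each product `φ(x)_i φ(y)_i` equals `exp (−‖x‖²/2 − ‖y‖²/2) / m · exp ⟨w_i, x + y⟩`, and by the
Gaussian moment generating function `E[exp ⟨w, z⟩] = exp (‖z‖²/2)`. Since
`‖x + y‖² = ‖x‖² + ‖y‖² + 2⟨x, y⟩`, each of the `m` summands has expectation `exp ⟨x, y⟩ / m`.
-/

open Real
open scoped NNReal

lemma integral_exp_mul_gaussianReal (μ : ℝ) (v : ℝ≥0) (t : ℝ) :
    ∫ x, exp (t * x) ∂gaussianReal μ v = exp (μ * t + v * t ^ 2 / 2) :=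
  congrFun mgf_fun_id_gaussianReal t

section GaussianVector

variable {ι : Type*} [Fintype ι] (μ : ι → ℝ) (v : ι → ℝ≥0)

lemma exp_sum_mul_eq_prod (w z : ι → ℝ) : exp (∑ i, w i * z i) = ∏ i, exp (z i * w i) := by
  simp only [exp_sum, mul_comm]

lemma integrable_exp_sum_mul_pi_gaussianReal (z : ι → ℝ) :
    Integrable (fun w ↦ exp (∑ i, w i * z i)) (Measure.pi fun i ↦ gaussianReal (μ i) (v i)) := by
  simp_rw [exp_sum_mul_eq_prod]
  exact Integrable.fintype_prod fun i ↦ integrable_exp_mul_gaussianReal (z i)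

lemma integral_exp_sum_mul_pi_gaussianReal (z : ι → ℝ) :
    ∫ w, exp (∑ i, w i * z i) ∂(Measure.pi fun i ↦ gaussianReal (μ i) (v i))
      = exp (∑ i, (μ i * z i + v i * z i ^ 2 / 2)) := by
  simp_rw [exp_sum_mul_eq_prod]
  rw [integral_fintype_prod_eq_prod fun i u ↦ exp (z i * u)]
  simp_rw [integral_exp_mul_gaussianReal, exp_sum]

end GaussianVector

lemma prf_mul_prf (m d : ℕ) (W : Fin m → Fin d → ℝ) (x y : Fin d → ℝ) (i : Fin m) :
    prf m d W x i * prf m d W y i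
      = exp (-(∑ j, x j ^ 2) / 2) * exp (-(∑ j, y j ^ 2) / 2) / m
        * exp (∑ j, W i j * (x j + y j)) := by
  simp_rw [prf, mul_add, Finset.sum_add_distrib, exp_add]
  rw [mul_mul_mul_comm, div_mul_div_comm, mul_self_sqrt m.cast_nonneg]

variable {m d : ℕ}

lemma integrable_exp_sum_mul_iidStdGaussian (z : Fin d → ℝ) (i : Fin m) :
    Integrable (fun W ↦ exp (∑ j, W i j * z j)) (iidStdGaussian m d) := by
  rw [iidStdGaussian]
  exact integrable_comp_eval (μ := fun _ : Fin m ↦ Measure.pi fun _ : Fin d ↦ gaussianReal 0 1)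
    (integrable_exp_sum_mul_pi_gaussianReal _ _ z)

lemma integral_exp_sum_mul_iidStdGaussian (z : Fin d → ℝ) (i : Fin m) :
    ∫ W, exp (∑ j, W i j * z j) ∂iidStdGaussian m d = exp ((∑ j, z j ^ 2) / 2) := by
  rw [iidStdGaussian,
    integral_comp_eval (μ := fun _ : Fin m ↦ Measure.pi fun _ : Fin d ↦ gaussianReal 0 1)
      (integrable_exp_sum_mul_pi_gaussianReal _ _ z).aestronglyMeasurable,
    integral_exp_sum_mul_pi_gaussianReal]
  simp [Finset.sum_div]

/-- The PRF kernel is an unbiased estimator of the exponentiated dot product: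
`E[⟨φ(x), φ(y)⟩] = exp ⟨x, y⟩`. -/
theorem integral_prf_inner (m d : ℕ) (hm : 0 < m) (x y : Fin d → ℝ) :
    ∫ W, (∑ i, prf m d W x i * prf m d W y i) ∂(iidStdGaussian m d)
      = Real.exp (∑ j, x j * y j) := by
  simp_rw [prf_mul_prf]
  rw [integral_finsetSum _ fun i _ ↦ (integrable_exp_sum_mul_iidStdGaussian _ i).const_mul _]
  simp_rw [integral_const_mul, integral_exp_sum_mul_iidStdGaussian, Finset.sum_const,
    Finset.card_univ, Fintype.card_fin, nsmul_eq_mul, ← exp_add]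
  field_simp
  rw [← exp_add]
  congr 1
  simp only [add_sq, mul_assoc, Finset.sum_add_distrib, ← Finset.mul_sum]
  ring
end

section
/- (Sample complexity of PRF attention approximation) Let w_1, ..., w_m be i.i.d. standard Gaussian random vectors on ℝ^d and let φ be the PRF map with m features. Let q, k_1, ..., k_n ∈ ℝ^d with ‖q‖ ≤ R and ‖k_j‖ ≤ R for all j, let 0 < ε < 1/2 and δ ∈ (0,1). Define the softmax attention distribution A ∈ ℝ^n by A_j = exp(⟨q, k_j⟩) / Σ_{j'=1}^n exp(⟨q, k_{j'}⟩), and the PRF attention distribution Â ∈ ℝ^n by Â_j = ⟨φ(q), φ(k_j)⟩ / Σ_{j'=1}^n ⟨φ(q), φ(k_{j'})⟩. If m ≥ n·exp(4R²) / (ε²·δ), then Pr( Σ_{j=1}^n |A_j − Â_j| ≥ 4ε ) ≤ δ. -/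
/-!
Each PRF inner product `⟨φ(q), φ(k)⟩` is the average of `m` i.i.d. copies of
`exp (-(‖q‖² + ‖k‖²)/2) · exp ⟨w, q + k⟩`. Since `⟨w, q + k⟩ ~ N(0, ‖q + k‖²)`, it is an unbiased
estimator of `exp ⟨q, k⟩` with relative variance `(exp ‖q + k‖² - 1)/m ≤ exp (4R²)/m`. Chebyshev's
inequality and a union bound over the `n` keys show that, outside an event of probability at most
`δ`, every estimate has relative error below `ε`; on that event normalising moves the attention
vector by at most `2ε` in `ℓ¹`.
-/

open MeasureTheory ProbabilityTheory

open Real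

section
variable {ι : Type*} [Fintype ι]

theorem map_pi_gaussianReal_sum_mul (v : ι → ℝ) :
    (Measure.pi fun _ : ι => gaussianReal 0 1).map (fun w => ∑ j, w j * v j) =
      gaussianReal 0 (∑ j, v j ^ 2).toNNReal := by
  set L : StrongDual ℝ (EuclideanSpace ℝ ι) := innerSL ℝ (WithLp.toLp 2 v)
  have hL : (fun w : ι → ℝ => ∑ j, w j * v j) = L ∘ WithLp.toLp 2 := by
    ext w; simp [L, PiLp.inner_apply, mul_comm]
  rw [hL, ← Measure.map_map L.continuous.measurable (by fun_prop), map_pi_eq_stdGaussian,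
    IsGaussian.map_eq_gaussianReal, integral_strongDual_stdGaussian, variance_dual_stdGaussian]
  simp [L, EuclideanSpace.norm_sq_eq]

end

section
variable {Ω : Type*} {mΩ : MeasurableSpace Ω} {P : Measure Ω} {X : Ω → ℝ} {μ : ℝ} {v : NNReal}

theorem integrable_exp_mul_of_map_eq_gaussianReal [IsProbabilityMeasure P]
    (hX : P.map X = gaussianReal μ v) (t : ℝ) :
    Integrable (fun ω => exp (t * X ω)) P :=
  mgf_pos_iff.mp (by rw [mgf_gaussianReal hX]; positivity)

theorem integral_exp_mul_of_map_eq_gaussianReal (hX : P.map X = gaussianReal μ v) (t : ℝ) :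
    ∫ ω, exp (t * X ω) ∂P = exp (μ * t + v * t ^ 2 / 2) :=
  mgf_gaussianReal hX t

theorem memLp_exp_of_map_eq_gaussianReal [IsProbabilityMeasure P]
    (hX : P.map X = gaussianReal μ v) :
    MemLp (fun ω => exp (X ω)) 2 P := by
  have hmeas : AEMeasurable X P := aemeasurable_of_map_neZero (by rw [hX]; infer_instance)
  refine (memLp_two_iff_integrable_sq hmeas.exp.aestronglyMeasurable).mpr ?_
  simpa [← exp_nat_mul] using integrable_exp_mul_of_map_eq_gaussianReal hX 2

theorem variance_exp_of_map_eq_gaussianReal [IsProbabilityMeasure P]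
    (hX : P.map X = gaussianReal μ v) :
    Var[fun ω => exp (X ω); P] = exp (2 * μ + 2 * v) - exp (2 * μ + v) := by
  rw [variance_eq_sub (memLp_exp_of_map_eq_gaussianReal hX)]
  have h1 := integral_exp_mul_of_map_eq_gaussianReal hX 1
  have h2 := integral_exp_mul_of_map_eq_gaussianReal hX 2
  simp only [one_mul] at h1
  simp only [Pi.pow_apply, ← exp_nat_mul, Nat.cast_ofNat, h1, h2, ← exp_nat_mul]
  congr 2 <;> ring

end

section
variable {ι α : Type*} [Fintype ι] {mα : MeasurableSpace α} {μ : Measure α}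
  [IsProbabilityMeasure μ] {g : α → ℝ}

theorem integral_sum_comp_eval (hg : Integrable g μ) :
    ∫ x, ∑ l, g (x l) ∂(Measure.pi fun _ : ι => μ) = Fintype.card ι * ∫ y, g y ∂μ := by
  rw [integral_finsetSum _ fun l _ => integrable_comp_eval hg]
  simp [integral_comp_eval (μ := fun _ : ι => μ) hg.aestronglyMeasurable]

theorem memLp_sum_comp_eval (hg : MemLp g 2 μ) :
    MemLp (fun x => ∑ l, g (x l)) 2 (Measure.pi fun _ : ι => μ) :=
  memLp_finsetSum _ fun l _ =>
    hg.comp_measurePreserving (measurePreserving_eval (fun _ : ι => μ) l)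

theorem variance_sum_comp_eval (hg : MemLp g 2 μ) :
    Var[fun x => ∑ l, g (x l); Measure.pi fun _ : ι => μ] = Fintype.card ι * Var[g; μ] := by
  have := variance_sum_pi (μ := fun _ : ι => μ) (X := fun _ => g) fun _ => hg
  simp only [Finset.sum_const, Finset.card_univ, nsmul_eq_mul] at this
  rw [← this]
  congr 1
  ext x
  simp

end

theorem sum_abs_div_sum_sub_div_sum_le {ι : Type*} [Fintype ι] {s t : ι → ℝ} {ε : ℝ}
    (hs : ∀ i, 0 < s i) (ht : ∀ i, 0 < t i) (hε : 0 ≤ ε) (h : ∀ i, |t i - s i| ≤ ε * s i) :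
    ∑ i, |s i / ∑ j, s j - t i / ∑ j, t j| ≤ 2 * ε := by
  rcases isEmpty_or_nonempty ι with hι | hι
  · simp [hε]
  set S := ∑ j, s j
  set T := ∑ j, t j
  have hS : 0 < S := Finset.sum_pos (fun i _ => hs i) Finset.univ_nonempty
  have hT : 0 < T := Finset.sum_pos (fun i _ => ht i) Finset.univ_nonempty
  have hD : ∑ i, |t i - s i| ≤ ε * S := by
    rw [Finset.mul_sum]; exact Finset.sum_le_sum fun i _ => h i
  have hTS : |T - S| ≤ ∑ i, |t i - s i| := by
    rw [← Finset.sum_sub_distrib]; exact Finset.abs_sum_le_sum_abs _ _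
  have hterm : ∀ i, |s i / S - t i / T| ≤ |t i - s i| / S + t i * |T - S| / (S * T) := by
    intro i
    have : s i / S - t i / T = (s i - t i) / S + t i * (T - S) / (S * T) := by
      field_simp; ring
    rw [this, abs_sub_comm (t i)]
    refine (abs_add_le _ _).trans_eq ?_
    rw [abs_div, abs_div, abs_mul, abs_of_pos hS, abs_of_pos (ht i), abs_of_pos (mul_pos hS hT)]
  calc ∑ i, |s i / S - t i / T|
      ≤ ∑ i, (|t i - s i| / S + t i * |T - S| / (S * T)) := Finset.sum_le_sum fun i _ => hterm i
    _ = (∑ i, |t i - s i| + |T - S|) / S := by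
      rw [Finset.sum_add_distrib, ← Finset.sum_div, ← Finset.sum_div, ← Finset.sum_mul,
        show ∑ i, t i = T from rfl]
      field_simp
    _ ≤ (ε * S + ε * S) / S := by gcongr; linarith
    _ = 2 * ε := by field_simp; ring

theorem sum_add_sq_le_of_sqrt_sum_sq_le {ι : Type*} [Fintype ι] {x y : ι → ℝ} {R : ℝ}
    (hx : √(∑ j, x j ^ 2) ≤ R) (hy : √(∑ j, y j ^ 2) ≤ R) :
    ∑ j, (x j + y j) ^ 2 ≤ 4 * R ^ 2 := by
  have hx' := (Real.sqrt_le_iff.mp hx).2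
  have hy' := (Real.sqrt_le_iff.mp hy).2
  calc ∑ j, (x j + y j) ^ 2 ≤ ∑ j, (2 * x j ^ 2 + 2 * y j ^ 2) :=
        Finset.sum_le_sum fun j _ => by nlinarith [sq_nonneg (x j - y j)]
    _ = 2 * ∑ j, x j ^ 2 + 2 * ∑ j, y j ^ 2 := by
        rw [Finset.sum_add_distrib, Finset.mul_sum, Finset.mul_sum]
    _ ≤ 4 * R ^ 2 := by linarith

instance isProbabilityMeasure_iidStdGaussian (m d : ℕ) :
    IsProbabilityMeasure (iidStdGaussian m d) := by
  unfold iidStdGaussian; infer_instance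

noncomputable def prfKernel (m d : ℕ) (W : Fin m → Fin d → ℝ) (x y : Fin d → ℝ) : ℝ :=
  ∑ l, prf m d W x l * prf m d W y l

section
variable {m d : ℕ} (x y : Fin d → ℝ)

theorem prfKernel_eq_sum (W : Fin m → Fin d → ℝ) :
    prfKernel m d W x y = ∑ l, exp (-(∑ j, x j ^ 2 + ∑ j, y j ^ 2) / 2) / m *
      exp (∑ j, W l j * (x j + y j)) := by
  refine Finset.sum_congr rfl fun l _ => ?_
  have hm : √(m : ℝ) * √(m : ℝ) = m := Real.mul_self_sqrt (Nat.cast_nonneg m)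
  simp only [prf, mul_add, Finset.sum_add_distrib, add_div, neg_add, exp_add]
  conv_rhs => rw [← hm]
  ring

theorem exp_neg_sum_sq_add_mul_exp_sum_add_sq :
    exp (-(∑ j, x j ^ 2 + ∑ j, y j ^ 2) / 2) * exp ((∑ j, (x j + y j) ^ 2) / 2) =
      exp (∑ j, x j * y j) := by
  rw [← exp_add]
  congr 1
  simp only [add_sq, Finset.sum_add_distrib, mul_assoc, ← Finset.mul_sum]
  ring

theorem prfKernel_pos (hm : m ≠ 0) (W : Fin m → Fin d → ℝ) : 0 < prfKernel m d W x y := by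
  have : Nonempty (Fin m) := ⟨⟨0, Nat.pos_of_ne_zero hm⟩⟩
  rw [prfKernel_eq_sum]
  exact Finset.sum_pos (fun l _ => by positivity) Finset.univ_nonempty

theorem memLp_prfKernel : MemLp (fun W => prfKernel m d W x y) 2 (iidStdGaussian m d) := by
  simp_rw [prfKernel_eq_sum]
  exact memLp_sum_comp_eval ((memLp_exp_of_map_eq_gaussianReal
    (map_pi_gaussianReal_sum_mul fun j => x j + y j)).const_mul _)

theorem integral_prfKernel (hm : m ≠ 0) :
    ∫ W, prfKernel m d W x y ∂iidStdGaussian m d = exp (∑ j, x j * y j) := by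
  have hX := map_pi_gaussianReal_sum_mul fun j => x j + y j
  simp_rw [prfKernel_eq_sum]
  rw [iidStdGaussian, integral_sum_comp_eval ((memLp_exp_of_map_eq_gaussianReal hX).integrable
    one_le_two |>.const_mul _), integral_const_mul]
  have := integral_exp_mul_of_map_eq_gaussianReal hX 1
  simp only [one_mul, zero_add, one_pow, mul_one] at this
  rw [this, Real.coe_toNNReal _ (by positivity), Fintype.card_fin,
    ← exp_neg_sum_sq_add_mul_exp_sum_add_sq]
  field_simp

theorem variance_prfKernel :
    Var[fun W => prfKernel m d W x y; iidStdGaussian m d] =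
      exp (∑ j, x j * y j) ^ 2 * (exp (∑ j, (x j + y j) ^ 2) - 1) / m := by
  have hX := map_pi_gaussianReal_sum_mul fun j => x j + y j
  simp_rw [prfKernel_eq_sum]
  rw [iidStdGaussian, variance_sum_comp_eval ((memLp_exp_of_map_eq_gaussianReal hX).const_mul _),
    variance_const_mul, variance_exp_of_map_eq_gaussianReal hX,
    Real.coe_toNNReal _ (by positivity), Fintype.card_fin, ← exp_neg_sum_sq_add_mul_exp_sum_add_sq]
  set V := ∑ j, (x j + y j) ^ 2
  have hV2 : exp (2 * 0 + 2 * V) - exp (2 * 0 + V) = exp V * (exp V - 1) := by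
    rw [mul_sub, ← exp_add]; ring_nf
  have hV : exp (V / 2) ^ 2 = exp V := by rw [← exp_nat_mul]; ring_nf
  rw [hV2, mul_pow, hV]
  rcases eq_or_ne (m : ℝ) 0 with hm | hm
  · simp [hm]
  · field_simp

theorem iidStdGaussian_le_abs_prfKernel_sub_le (hm : m ≠ 0) {ε : ℝ} (hε : 0 < ε) :
    iidStdGaussian m d
        {W | ε * exp (∑ j, x j * y j) ≤ |prfKernel m d W x y - exp (∑ j, x j * y j)|} ≤
      ENNReal.ofReal ((exp (∑ j, (x j + y j) ^ 2) - 1) / (m * ε ^ 2)) := by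
  have := meas_ge_le_variance_div_sq (memLp_prfKernel (m := m) x y)
    (c := ε * exp (∑ j, x j * y j)) (by positivity)
  rw [integral_prfKernel x y hm, variance_prfKernel] at this
  convert this using 2
  field_simp

end

theorem prf_attention_sample_complexity_general (m d n : ℕ) (hm : 0 < m)
    (q : Fin d → ℝ) (k : Fin n → Fin d → ℝ)
    (R : ℝ) (hq : Real.sqrt (∑ j, (q j) ^ 2) ≤ R)
    (hk : ∀ i, Real.sqrt (∑ j, (k i j) ^ 2) ≤ R)
    (ε δ : ℝ) (hε0 : 0 < ε) (hδ0 : 0 < δ)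
    (hm' : n * Real.exp (4 * R ^ 2) / (ε ^ 2 * δ) ≤ m) :
    iidStdGaussian m d
        {W | 4 * ε ≤
          ∑ i : Fin n,
            |Real.exp (∑ j, q j * k i j) / (∑ i', Real.exp (∑ j, q j * k i' j)) -
              (∑ l, prf m d W q l * prf m d W (k i) l) /
                (∑ i', ∑ l, prf m d W q l * prf m d W (k i') l)|}
      ≤ ENNReal.ofReal δ := by
  set s : Fin n → ℝ := fun i => exp (∑ j, q j * k i j)
  have hsub : {W | 4 * ε ≤ ∑ i, |s i / ∑ i', s i' -
        prfKernel m d W q (k i) / ∑ i', prfKernel m d W q (k i')|} ⊆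
      ⋃ i, {W | ε * s i ≤ |prfKernel m d W q (k i) - s i|} := by
    intro W hW
    by_contra hW'
    simp only [Set.mem_iUnion, Set.mem_ofPred_eq, not_exists, not_le] at hW hW'
    have := sum_abs_div_sum_sub_div_sum_le (fun i => exp_pos _)
      (fun i => prfKernel_pos q (k i) hm.ne' W) hε0.le fun i => (hW' i).le
    linarith
  have hδ : n * exp (4 * R ^ 2) / (m * ε ^ 2) ≤ δ := by
    rw [div_le_iff₀ (by positivity)] at hm' ⊢
    linarith
  calc _ ≤ iidStdGaussian m d (⋃ i, {W | ε * s i ≤ |prfKernel m d W q (k i) - s i|}) :=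
        measure_mono hsub
    _ ≤ ∑ i, iidStdGaussian m d {W | ε * s i ≤ |prfKernel m d W q (k i) - s i|} :=
        measure_iUnion_fintype_le _ _
    _ ≤ ∑ _ : Fin n, ENNReal.ofReal (exp (4 * R ^ 2) / (m * ε ^ 2)) :=
        Finset.sum_le_sum fun i _ =>
          (iidStdGaussian_le_abs_prfKernel_sub_le q (k i) hm.ne' hε0).trans
            (ENNReal.ofReal_le_ofReal (by
              gcongr
              exact (sub_le_self _ zero_le_one).trans
                (exp_le_exp.mpr (sum_add_sq_le_of_sqrt_sum_sq_le hq (hk i)))))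
    _ ≤ ENNReal.ofReal δ := by
      rw [Finset.sum_const, Finset.card_univ, Fintype.card_fin, nsmul_eq_mul,
        ← ENNReal.ofReal_natCast, ← ENNReal.ofReal_mul (Nat.cast_nonneg n), ← mul_div_assoc]
      exact ENNReal.ofReal_le_ofReal hδ

/-- Sample complexity of PRF attention approximation: if `‖q‖, ‖k_j‖ ≤ R` and
`m ≥ n exp (4R²) / (ε² δ)`, then the ℓ¹ distance between the softmax attention
distribution `A` and the PRF attention distribution `Â` is at least `4ε` with
probability at most `δ`. -/
theorem prf_attention_sample_complexity (m d n : ℕ) (hm : 0 < m) (hn : 0 < n)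
    (q : Fin d → ℝ) (k : Fin n → Fin d → ℝ)
    (R : ℝ) (hR : 0 < R) (hq : Real.sqrt (∑ j, (q j) ^ 2) ≤ R)
    (hk : ∀ i, Real.sqrt (∑ j, (k i j) ^ 2) ≤ R)
    (ε δ : ℝ) (hε0 : 0 < ε) (hε1 : ε < 1 / 2) (hδ0 : 0 < δ) (hδ1 : δ < 1)
    (hm' : n * Real.exp (4 * R ^ 2) / (ε ^ 2 * δ) ≤ m) :
    iidStdGaussian m d
        {W | 4 * ε ≤
          ∑ i : Fin n,
            |Real.exp (∑ j, q j * k i j) / (∑ i', Real.exp (∑ j, q j * k i' j)) -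
              (∑ l, prf m d W q l * prf m d W (k i) l) /
                (∑ i', ∑ l, prf m d W q l * prf m d W (k i') l)|}
      ≤ ENNReal.ofReal δ :=
  prf_attention_sample_complexity_general m d n hm q k R hq hk ε δ hε0 hδ0 hm'
end
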